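/- arXiv:1909.05334 — 6 statements merged into one kernel-verified Lean document; each statement's English description precedes it below -/
import Mathlib

section
/- Let X be a Banach space and X_d a BK-space with the canonical unit vectors as a Schauder basis. A sequence {x_n} ⊆ X is a Bessel sequence for X with respect to X_d (i.e., {f(x_n)} ∈ Y_d for all f ∈ X* and ‖{f(x_n)}‖_{Y_d} ≤ B‖f‖ for some B > 0) if and only if there exists a bounded linear operator T : X_d → X with T({c_n}) = Σ_{n=1}^∞ c_n x_n for all {c_n} ∈ X_d. -/
/-!
For `f ∈ X*` the Bessel condition provides `g ∈ Xd*` with `f (∑_{n<N} cₙ xₙ) = g (∑_{n<N} cₙ eₙ)`,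
so by Hahn–Banach `‖∑_{M≤n<N} cₙ xₙ‖ ≤ B ‖∑_{M≤n<N} cₙ eₙ‖`. The basis expansion of `c` is Cauchy,
hence so is `∑ cₙ xₙ` in the Banach space `X`; its sum is linear in `c` with norm at most `B ‖c‖`.
Conversely `T eₙ = xₙ`, so `g = f ∘ T` witnesses the Bessel condition with bound `‖T‖`.
-/

open Filter Topology Finset

section Synthesis

variable {𝕜 Xd X : Type*} [NontriviallyNormedField 𝕜]
  [NormedAddCommGroup Xd] [NormedSpace 𝕜 Xd] [NormedAddCommGroup X] [NormedSpace 𝕜 X]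

def partialSynthesis (coord : ℕ → StrongDual 𝕜 Xd) (v : ℕ → X) (N : ℕ) : Xd →L[𝕜] X :=
  ∑ n ∈ range N, (coord n).smulRight (v n)

@[simp]
theorem partialSynthesis_apply (coord : ℕ → StrongDual 𝕜 Xd) (v : ℕ → X) (N : ℕ) (c : Xd) :
    partialSynthesis coord v N c = ∑ n ∈ range N, coord n c • v n := by
  simp [partialSynthesis]

theorem partialSynthesis_apply_of_lt {coord : ℕ → StrongDual 𝕜 Xd} {e : ℕ → Xd}
    (hcoord_e : ∀ k n, coord k (e n) = if k = n then 1 else 0) (v : ℕ → X) {n N : ℕ}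
    (hn : n < N) : partialSynthesis coord v N (e n) = v n := by
  simp [hcoord_e, ite_smul, hn]

theorem tendsto_partialSynthesis_apply_basis {coord : ℕ → StrongDual 𝕜 Xd} {e : ℕ → Xd}
    (hcoord_e : ∀ k n, coord k (e n) = if k = n then 1 else 0) (v : ℕ → X) (n : ℕ) :
    Tendsto (fun N => partialSynthesis coord v N (e n)) atTop (𝓝 (v n)) :=
  tendsto_const_nhds.congr' <| (eventually_gt_atTop n).mono fun _ hN =>
    (partialSynthesis_apply_of_lt hcoord_e v hN).symm

end Synthesis

theorem cauchySeq_of_dist_le_mul {α β : Type*} [PseudoMetricSpace α] [PseudoMetricSpace β]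
    {u : ℕ → α} {v : ℕ → β} {B : ℝ} (hB : 0 ≤ B)
    (huv : ∀ m n, dist (u m) (u n) ≤ B * dist (v m) (v n)) (hv : CauchySeq v) :
    CauchySeq u := by
  obtain ⟨b, b_nonneg, hb, b_lim⟩ := cauchySeq_iff_le_tendsto_0.1 hv
  refine cauchySeq_iff_le_tendsto_0.2 ⟨fun N => B * b N, fun N => mul_nonneg hB (b_nonneg N),
    fun m n N hm hn => (huv m n).trans (mul_le_mul_of_nonneg_left (hb m n N hm hn) hB), ?_⟩
  simpa using b_lim.const_mul B

section Bessel

variable (𝕜 : Type*) {Xd X : Type*} [RCLike 𝕜]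
  [NormedAddCommGroup Xd] [NormedSpace 𝕜 Xd] [NormedAddCommGroup X] [NormedSpace 𝕜 X]

def IsBesselSeq (e : ℕ → Xd) (x : ℕ → X) (B : ℝ) : Prop :=
  ∀ f : StrongDual 𝕜 X, ∃ g : StrongDual 𝕜 Xd, (∀ n, g (e n) = f (x n)) ∧ ‖g‖ ≤ B * ‖f‖

variable {𝕜}

theorem IsBesselSeq.mono {e : ℕ → Xd} {x : ℕ → X} {B B' : ℝ} (h : IsBesselSeq 𝕜 e x B)
    (hBB' : B ≤ B') : IsBesselSeq 𝕜 e x B' := fun f =>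
  let ⟨g, hge, hg⟩ := h f
  ⟨g, hge, hg.trans (mul_le_mul_of_nonneg_right hBB' (norm_nonneg f))⟩

theorem isBesselSeq_of_tendsto_partialSynthesis {coord : ℕ → StrongDual 𝕜 Xd} {e : ℕ → Xd}
    (hcoord_e : ∀ k n, coord k (e n) = if k = n then 1 else 0) {x : ℕ → X} {T : Xd →L[𝕜] X}
    (hT : ∀ c, Tendsto (fun N => partialSynthesis coord x N c) atTop (𝓝 (T c))) :
    IsBesselSeq 𝕜 e x ‖T‖ := by
  intro f
  have hTe : ∀ n, T (e n) = x n := fun n =>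
    tendsto_nhds_unique (hT (e n)) (tendsto_partialSynthesis_apply_basis hcoord_e x n)
  refine ⟨f ∘L T, fun n => by simp [hTe], ?_⟩
  rw [mul_comm]
  exact f.opNorm_comp_le T

theorem IsBesselSeq.dist_partialSynthesis_le {coord : ℕ → StrongDual 𝕜 Xd} {e : ℕ → Xd}
    {x : ℕ → X} {B : ℝ} (h : IsBesselSeq 𝕜 e x B) (hB : 0 ≤ B) (c : Xd) (m n : ℕ) :
    dist (partialSynthesis coord x m c) (partialSynthesis coord x n c) ≤
      B * dist (partialSynthesis coord e m c) (partialSynthesis coord e n c) := by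
  rw [dist_eq_norm, dist_eq_norm]
  refine NormedSpace.norm_le_dual_bound 𝕜 _ (by positivity) fun f => ?_
  obtain ⟨g, hge, hg⟩ := h f
  have hfg : ∀ N, f (partialSynthesis coord x N c) = g (partialSynthesis coord e N c) := by
    simp [hge]
  calc ‖f (partialSynthesis coord x m c - partialSynthesis coord x n c)‖
      = ‖g (partialSynthesis coord e m c - partialSynthesis coord e n c)‖ := by
        simp only [map_sub, hfg]
    _ ≤ ‖g‖ * ‖partialSynthesis coord e m c - partialSynthesis coord e n c‖ := g.le_opNorm _
    _ ≤ B * ‖partialSynthesis coord e m c - partialSynthesis coord e n c‖ * ‖f‖ := by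
        rw [mul_right_comm]; gcongr

theorem IsBesselSeq.exists_tendsto_partialSynthesis [CompleteSpace X]
    {coord : ℕ → StrongDual 𝕜 Xd} {e : ℕ → Xd}
    (hbasis : ∀ c, Tendsto (fun N => partialSynthesis coord e N c) atTop (𝓝 c))
    {x : ℕ → X} {B : ℝ} (h : IsBesselSeq 𝕜 e x B) (hB : 0 ≤ B) :
    ∃ T : Xd →L[𝕜] X, ∀ c, Tendsto (fun N => partialSynthesis coord x N c) atTop (𝓝 (T c)) := by
  have hcauchy : ∀ c, CauchySeq fun N => partialSynthesis coord x N c := fun c =>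
    cauchySeq_of_dist_le_mul hB (h.dist_partialSynthesis_le hB c) (hbasis c).cauchySeq
  choose T hT using fun c => cauchySeq_tendsto_of_complete (hcauchy c)
  let T' : Xd →ₗ[𝕜] X :=
    linearMapOfTendsto T (fun N => (partialSynthesis coord x N : Xd →ₗ[𝕜] X))
      (tendsto_pi_nhds.2 hT)
  have hT'_le : ∀ c, ‖T' c‖ ≤ B * ‖c‖ := fun c =>
    le_of_tendsto_of_tendsto' (hT c).norm ((hbasis c).norm.const_mul B) fun N => by
      simpa using h.dist_partialSynthesis_le hB c N 0
  exact ⟨T'.mkContinuous B hT'_le, hT⟩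

end Bessel

theorem stmt7_general {X Xd : Type*}
    [NormedAddCommGroup X] [NormedSpace ℝ X] [CompleteSpace X]
    [NormedAddCommGroup Xd] [NormedSpace ℝ Xd]
    (coord : ℕ → (Xd →L[ℝ] ℝ)) (e : ℕ → Xd)
    (hcoord_e : ∀ k n, coord k (e n) = if k = n then (1 : ℝ) else 0)
    (hbasis : ∀ c : Xd,
      Tendsto (fun N => ∑ k ∈ Finset.range N, coord k c • e k) atTop (nhds c))
    (x : ℕ → X) :
    (∃ B : ℝ, 0 < B ∧ ∀ f : X →L[ℝ] ℝ, ∃ g : Xd →L[ℝ] ℝ,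
        (∀ n, g (e n) = f (x n)) ∧ ‖g‖ ≤ B * ‖f‖) ↔
    (∃ T : Xd →L[ℝ] X, ∀ c : Xd,
        Tendsto (fun N => ∑ n ∈ Finset.range N, coord n c • x n) atTop (nhds (T c))) := by
  simp only [← partialSynthesis_apply] at hbasis ⊢
  constructor
  · rintro ⟨B, hB, hx⟩
    exact IsBesselSeq.exists_tendsto_partialSynthesis hbasis hx hB.le
  · rintro ⟨T, hT⟩
    exact ⟨‖T‖ + 1, by positivity,
      (isBesselSeq_of_tendsto_partialSynthesis hcoord_e hT).mono (by linarith)⟩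

theorem stmt7 {X Xd : Type*}
    [NormedAddCommGroup X] [NormedSpace ℝ X] [CompleteSpace X]
    [NormedAddCommGroup Xd] [NormedSpace ℝ Xd] [CompleteSpace Xd]
    (coord : ℕ → (Xd →L[ℝ] ℝ)) (e : ℕ → Xd)
    (hcoord_e : ∀ k n, coord k (e n) = if k = n then (1 : ℝ) else 0)
    (hbasis : ∀ c : Xd,
      Tendsto (fun N => ∑ k ∈ Finset.range N, coord k c • e k) atTop (nhds c))
    (x : ℕ → X) :
    (∃ B : ℝ, 0 < B ∧ ∀ f : X →L[ℝ] ℝ, ∃ g : Xd →L[ℝ] ℝ,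
        (∀ n, g (e n) = f (x n)) ∧ ‖g‖ ≤ B * ‖f‖) ↔
    (∃ T : Xd →L[ℝ] X, ∀ c : Xd,
        Tendsto (fun N => ∑ n ∈ Finset.range N, coord n c • x n) atTop (nhds (T c))) :=
  stmt7_general coord e hcoord_e hbasis x
end

section
/- Let X be a Banach space, K ∈ L(X), and let {x_n} be an approximative atomic system for K with associated approximative X_d-Bessel sequence {h_{n,i}} (with Bessel bound B) and Bessel bound A for {x_n}. Then there exist constants C, D > 0 such that C‖K(x)‖ ≤ ‖{h_{n,i}(x)}‖_{X_d} for all x ∈ X, and D‖K*(h)‖ ≤ ‖{h(x_n)}‖_{Y_d} for all h ∈ X*. -/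
open Filter Topology

/-- The Banach-space adjoint of a bounded operator. -/
noncomputable def adjB {X Y : Type*} [NormedAddCommGroup X] [NormedSpace ℝ X]
    [NormedAddCommGroup Y] [NormedSpace ℝ Y] (T : X →L[ℝ] Y) :
    (Y →L[ℝ] ℝ) →L[ℝ] (X →L[ℝ] ℝ) :=
  (ContinuousLinearMap.compL ℝ X Y ℝ).flip T

/- Every functional `f` on `X` factors through the analysis operator: if `g` extends
`e n ↦ f (x n)`, applying `f` and `g` to the two approximating sums gives `f ∘ K = g ∘ S`.
Both inequalities then follow from `‖g‖ ≤ A‖f‖` (through Hahn–Banach) and `‖S‖ ≤ B`. -/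

section

variable {𝕜 X Y : Type*} [NontriviallyNormedField 𝕜] [NormedAddCommGroup X] [NormedSpace 𝕜 X]
  [NormedAddCommGroup Y] [NormedSpace 𝕜 Y]

theorem apply_eq_apply_of_tendsto_sum {ι : Type*} {l : Filter ι} [l.NeBot]
    (f : X →L[𝕜] 𝕜) (g : Y →L[𝕜] 𝕜) (x : ℕ → X) (e : ℕ → Y)
    (hfg : ∀ n, g (e n) = f (x n)) (N : ι → ℕ) (c : ι → ℕ → 𝕜) {a : X} {b : Y}
    (ha : Tendsto (fun j => ∑ i ∈ Finset.range (N j), c j i • x i) l (𝓝 a))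
    (hb : Tendsto (fun j => ∑ i ∈ Finset.range (N j), c j i • e i) l (𝓝 b)) :
    f a = g b := by
  refine tendsto_nhds_unique ((f.continuous.tendsto a).comp ha) ?_
  refine ((g.continuous.tendsto b).comp hb).congr fun j => ?_
  simp only [Function.comp_apply, map_sum, map_smul, hfg]

theorem norm_comp_le_of_comp_eq {Z : Type*} [NormedAddCommGroup Z] [NormedSpace 𝕜 Z]
    {f : X →L[𝕜] 𝕜} {g : Y →L[𝕜] 𝕜} {K : Z →L[𝕜] X} {S : Z →L[𝕜] Y}
    (hfg : f.comp K = g.comp S) {B : ℝ} (hB : 0 ≤ B) (hSB : ∀ z, ‖S z‖ ≤ B * ‖z‖) :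
    ‖f.comp K‖ ≤ B * ‖g‖ := by
  calc ‖f.comp K‖ = ‖g.comp S‖ := by rw [hfg]
    _ ≤ ‖g‖ * ‖S‖ := g.opNorm_comp_le S
    _ ≤ ‖g‖ * B := by gcongr; exact S.opNorm_le_bound hB hSB
    _ = B * ‖g‖ := mul_comm _ _

end

theorem norm_le_mul_of_forall_dual_factor {𝕜 X Y : Type*} [RCLike 𝕜]
    [NormedAddCommGroup X] [NormedSpace 𝕜 X] [NormedAddCommGroup Y] [NormedSpace 𝕜 Y]
    {u : X} {v : Y} {A : ℝ} (hA : 0 ≤ A)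
    (h : ∀ f : X →L[𝕜] 𝕜, ∃ g : Y →L[𝕜] 𝕜, ‖g‖ ≤ A * ‖f‖ ∧ f u = g v) :
    ‖u‖ ≤ A * ‖v‖ := by
  refine NormedSpace.norm_le_dual_bound 𝕜 u (by positivity) fun f => ?_
  obtain ⟨g, hgA, hfg⟩ := h f
  calc ‖f u‖ = ‖g v‖ := by rw [hfg]
    _ ≤ ‖g‖ * ‖v‖ := g.le_opNorm v
    _ ≤ A * ‖f‖ * ‖v‖ := by gcongr
    _ = A * ‖v‖ * ‖f‖ := by ring

theorem stmt9_general {X Xd : Type*}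
    [NormedAddCommGroup X] [NormedSpace ℝ X]
    [NormedAddCommGroup Xd] [NormedSpace ℝ Xd]
    (e : ℕ → Xd)
    (x : ℕ → X) (K : X →L[ℝ] X)
    -- {x_n} is a Bessel sequence with bound A
    (A : ℝ) (hA : 0 < A)
    (hBessel : ∀ f : X →L[ℝ] ℝ, ∃ g : Xd →L[ℝ] ℝ,
        (∀ n, g (e n) = f (x n)) ∧ ‖g‖ ≤ A * ‖f‖)
    -- {h_{n,i}} is an approximative Xd-Bessel sequence with bound B,
    -- with analysis operator S
    (m : ℕ → ℕ)
    (h : ℕ → ℕ → (X →L[ℝ] ℝ)) (S : X →L[ℝ] Xd)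
    (hS : ∀ z : X,
      Tendsto (fun n => ∑ i ∈ Finset.range (m n), h n i z • e i) atTop (nhds (S z)))
    (B : ℝ) (hB : 0 < B) (hSB : ∀ z : X, ‖S z‖ ≤ B * ‖z‖)
    -- K(x) = lim_n Σ_{i=1}^{m_n} h_{n,i}(x) x_i
    (hKexp : ∀ z : X,
      Tendsto (fun n => ∑ i ∈ Finset.range (m n), h n i z • x i) atTop (nhds (K z))) :
    (∃ C : ℝ, 0 < C ∧ ∀ z : X, C * ‖K z‖ ≤ ‖S z‖) ∧
    (∃ D : ℝ, 0 < D ∧ ∀ (f : X →L[ℝ] ℝ) (g : Xd →L[ℝ] ℝ),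
        (∀ n, g (e n) = f (x n)) → D * ‖adjB K f‖ ≤ ‖g‖) := by
  have factor : ∀ (f : X →L[ℝ] ℝ) (g : Xd →L[ℝ] ℝ), (∀ n, g (e n) = f (x n)) →
      f.comp K = g.comp S := fun f g hfg => ContinuousLinearMap.ext fun z =>
    apply_eq_apply_of_tendsto_sum f g x e hfg m (fun n i => h n i z) (hKexp z) (hS z)
  refine ⟨⟨A⁻¹, inv_pos.2 hA, fun z => ?_⟩, ⟨B⁻¹, inv_pos.2 hB, fun f g hfg => ?_⟩⟩
  · rw [inv_mul_le_iff₀ hA]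
    refine norm_le_mul_of_forall_dual_factor (𝕜 := ℝ) hA.le fun f => ?_
    obtain ⟨g, hfg, hgA⟩ := hBessel f
    exact ⟨g, hgA, congrArg (· z) (factor f g hfg)⟩
  · rw [inv_mul_le_iff₀ hB]
    exact norm_comp_le_of_comp_eq (factor f g hfg) hB.le hSB

theorem stmt9 {X Xd : Type*}
    [NormedAddCommGroup X] [NormedSpace ℝ X] [CompleteSpace X]
    [NormedAddCommGroup Xd] [NormedSpace ℝ Xd] [CompleteSpace Xd]
    (coord : ℕ → (Xd →L[ℝ] ℝ)) (e : ℕ → Xd)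
    (hcoord_e : ∀ k n, coord k (e n) = if k = n then (1 : ℝ) else 0)
    (hbasis : ∀ c : Xd,
      Tendsto (fun N => ∑ k ∈ Finset.range N, coord k c • e k) atTop (nhds c))
    (x : ℕ → X) (K : X →L[ℝ] X)
    -- {x_n} is a Bessel sequence with bound A
    (A : ℝ) (hA : 0 < A)
    (hBessel : ∀ f : X →L[ℝ] ℝ, ∃ g : Xd →L[ℝ] ℝ,
        (∀ n, g (e n) = f (x n)) ∧ ‖g‖ ≤ A * ‖f‖)
    -- {h_{n,i}} is an approximative Xd-Bessel sequence with bound B,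
    -- with analysis operator S
    (m : ℕ → ℕ) (hm : StrictMono m) (hm0 : 0 < m 0)
    (h : ℕ → ℕ → (X →L[ℝ] ℝ)) (S : X →L[ℝ] Xd)
    (hS : ∀ z : X,
      Tendsto (fun n => ∑ i ∈ Finset.range (m n), h n i z • e i) atTop (nhds (S z)))
    (B : ℝ) (hB : 0 < B) (hSB : ∀ z : X, ‖S z‖ ≤ B * ‖z‖)
    -- K(x) = lim_n Σ_{i=1}^{m_n} h_{n,i}(x) x_i
    (hKexp : ∀ z : X,
      Tendsto (fun n => ∑ i ∈ Finset.range (m n), h n i z • x i) atTop (nhds (K z))) :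
    (∃ C : ℝ, 0 < C ∧ ∀ z : X, C * ‖K z‖ ≤ ‖S z‖) ∧
    (∃ D : ℝ, 0 < D ∧ ∀ (f : X →L[ℝ] ℝ) (g : Xd →L[ℝ] ℝ),
        (∀ n, g (e n) = f (x n)) → D * ‖adjB K f‖ ≤ ‖g‖) :=
  stmt9_general e x K A hA hBessel m h S hS B hB hSB hKexp
end

section
/- Let X be a Banach space, M ⊆ X a closed subspace, and {x_n} an approximative family of local atoms for M with associated approximative X_d-Bessel sequence {h_{n,i}} (Bessel bound B), and let A be the Bessel bound of {x_n}. Then for all x ∈ M, ‖x‖ ≤ A‖{h_{n,i}(x)}‖_{X_d}, and for all f ∈ M*, (1/B)‖f‖ ≤ ‖{f(x_n)}‖; in particular {x_n} is a frame for M and ({x_n}, {h_{n,i}}) is an approximative atomic decomposition for M. -/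
/-!
If `g (e n) = f (x n)` for all `n`, applying `f` to the reconstruction formula
`z = lim ∑ h n i z • x i` and `g` to `S z = lim ∑ h n i z • e i` shows `f z = g (S z)` on `M`.
Both inequalities follow from this factorisation: the first by testing against a norming
functional of `z` (Hahn–Banach) and the Bessel bound, the second from `‖S z‖ ≤ B ‖z‖`.
-/

open Filter Topology

theorem ContinuousLinearMap.apply_eq_of_tendsto_sum_smul {R X Y F ι : Type*} [Semiring R]
    [TopologicalSpace X] [AddCommMonoid X] [Module R X]
    [TopologicalSpace Y] [AddCommMonoid Y] [Module R Y]
    [TopologicalSpace F] [T2Space F] [AddCommMonoid F] [Module R F]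
    {l : Filter ι} [l.NeBot] (f : X →L[R] F) (g : Y →L[R] F) {x : ℕ → X} {e : ℕ → Y}
    (hfg : ∀ i, g (e i) = f (x i)) {c : ι → ℕ → R} {s : ι → Finset ℕ} {z : X} {w : Y}
    (hx : Tendsto (fun n => ∑ i ∈ s n, c n i • x i) l (𝓝 z))
    (he : Tendsto (fun n => ∑ i ∈ s n, c n i • e i) l (𝓝 w)) :
    f z = g w :=
  tendsto_nhds_unique ((f.continuous.tendsto z).comp hx)
    (by simpa [Function.comp_def, map_sum, map_smul, hfg] using (g.continuous.tendsto w).comp he)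

theorem norm_le_mul_of_forall_dual {𝕜 X Y : Type*} [RCLike 𝕜]
    [NormedAddCommGroup X] [NormedSpace 𝕜 X] [NormedAddCommGroup Y] [NormedSpace 𝕜 Y]
    {A : ℝ} (hA : 0 ≤ A) {z : X} {w : Y}
    (H : ∀ f : X →L[𝕜] 𝕜, ∃ g : Y →L[𝕜] 𝕜, f z = g w ∧ ‖g‖ ≤ A * ‖f‖) :
    ‖z‖ ≤ A * ‖w‖ := by
  obtain ⟨f, hf1, hfz⟩ := exists_dual_vector'' 𝕜 z
  obtain ⟨g, hfg, hgA⟩ := H f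
  calc ‖z‖ = ‖g w‖ := by rw [← hfg, hfz, RCLike.norm_ofReal, abs_norm]
    _ ≤ ‖g‖ * ‖w‖ := g.le_opNorm w
    _ ≤ A * ‖f‖ * ‖w‖ := by gcongr
    _ ≤ A * ‖w‖ := by
      have : A * ‖f‖ ≤ A := mul_le_of_le_one_right hA hf1
      gcongr

theorem ContinuousLinearMap.norm_comp_subtypeL_le_of_eq_comp {𝕜 X Y F : Type*}
    [NontriviallyNormedField 𝕜] [NormedAddCommGroup X] [NormedSpace 𝕜 X]
    [NormedAddCommGroup Y] [NormedSpace 𝕜 Y] [NormedAddCommGroup F] [NormedSpace 𝕜 F]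
    {M : Submodule 𝕜 X} (f : X →L[𝕜] F) (g : Y →L[𝕜] F) {S : X → Y} {B : ℝ} (hB : 0 ≤ B)
    (hSB : ∀ z ∈ M, ‖S z‖ ≤ B * ‖z‖) (hfg : ∀ z ∈ M, f z = g (S z)) :
    ‖f.comp M.subtypeL‖ ≤ B * ‖g‖ := by
  refine (f.comp M.subtypeL).opNorm_le_bound (by positivity) fun z => ?_
  calc ‖f z‖ = ‖g (S z)‖ := by rw [hfg z z.2]
    _ ≤ ‖g‖ * (B * ‖z‖) := (g.le_opNorm _).trans (by gcongr; exact hSB z z.2)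
    _ = B * ‖g‖ * ‖z‖ := by ring

theorem stmt10_general {X Xd : Type*}
    [NormedAddCommGroup X] [NormedSpace ℝ X]
    [NormedAddCommGroup Xd] [NormedSpace ℝ Xd]
    (e : ℕ → Xd)
    (x : ℕ → X) (M : Submodule ℝ X)
    -- {x_n} is a Bessel sequence with bound A
    (A : ℝ) (hA : 0 < A)
    (hBessel : ∀ f : X →L[ℝ] ℝ, ∃ g : Xd →L[ℝ] ℝ,
        (∀ n, g (e n) = f (x n)) ∧ ‖g‖ ≤ A * ‖f‖)
    -- {h_{n,i}} is an approximative Xd-Bessel sequence for M with bound B,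
    -- with analysis operator S
    (m : ℕ → ℕ)
    (h : ℕ → ℕ → (X →L[ℝ] ℝ)) (S : X →L[ℝ] Xd)
    (hS : ∀ z ∈ M,
      Tendsto (fun n => ∑ i ∈ Finset.range (m n), h n i z • e i) atTop (nhds (S z)))
    (B : ℝ) (hB : 0 < B) (hSB : ∀ z ∈ M, ‖S z‖ ≤ B * ‖z‖)
    -- x = lim_n Σ_{i=1}^{m_n} h_{n,i}(x) x_i for all x ∈ M
    (hexp : ∀ z ∈ M,
      Tendsto (fun n => ∑ i ∈ Finset.range (m n), h n i z • x i) atTop (nhds z)) :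
    (∀ z ∈ M, ‖z‖ ≤ A * ‖S z‖) ∧
    (∀ (f : X →L[ℝ] ℝ) (g : Xd →L[ℝ] ℝ), (∀ n, g (e n) = f (x n)) →
      (1 / B) * ‖f.comp M.subtypeL‖ ≤ ‖g‖) := by
  have hfactor (f : X →L[ℝ] ℝ) (g : Xd →L[ℝ] ℝ) (hg : ∀ n, g (e n) = f (x n)) :
      ∀ z ∈ M, f z = g (S z) := fun z hz =>
    f.apply_eq_of_tendsto_sum_smul g hg (hexp z hz) (hS z hz)
  refine ⟨fun z hz => norm_le_mul_of_forall_dual (𝕜 := ℝ) hA.le fun f => ?_, fun f g hg => ?_⟩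
  · obtain ⟨g, hg, hgA⟩ := hBessel f
    exact ⟨g, hfactor f g hg z hz, hgA⟩
  · rw [one_div, inv_mul_le_iff₀ hB]
    exact f.norm_comp_subtypeL_le_of_eq_comp g hB.le hSB (hfactor f g hg)

theorem stmt10 {X Xd : Type*}
    [NormedAddCommGroup X] [NormedSpace ℝ X] [CompleteSpace X]
    [NormedAddCommGroup Xd] [NormedSpace ℝ Xd] [CompleteSpace Xd]
    (coord : ℕ → (Xd →L[ℝ] ℝ)) (e : ℕ → Xd)
    (hcoord_e : ∀ k n, coord k (e n) = if k = n then (1 : ℝ) else 0)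
    (hbasis : ∀ c : Xd,
      Tendsto (fun N => ∑ k ∈ Finset.range N, coord k c • e k) atTop (nhds c))
    (x : ℕ → X) (M : Submodule ℝ X) (hM : IsClosed (M : Set X))
    -- {x_n} is a Bessel sequence with bound A
    (A : ℝ) (hA : 0 < A)
    (hBessel : ∀ f : X →L[ℝ] ℝ, ∃ g : Xd →L[ℝ] ℝ,
        (∀ n, g (e n) = f (x n)) ∧ ‖g‖ ≤ A * ‖f‖)
    -- {h_{n,i}} is an approximative Xd-Bessel sequence for M with bound B,
    -- with analysis operator S
    (m : ℕ → ℕ) (hm : StrictMono m) (hm0 : 0 < m 0)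
    (h : ℕ → ℕ → (X →L[ℝ] ℝ)) (S : X →L[ℝ] Xd)
    (hS : ∀ z ∈ M,
      Tendsto (fun n => ∑ i ∈ Finset.range (m n), h n i z • e i) atTop (nhds (S z)))
    (B : ℝ) (hB : 0 < B) (hSB : ∀ z ∈ M, ‖S z‖ ≤ B * ‖z‖)
    -- x = lim_n Σ_{i=1}^{m_n} h_{n,i}(x) x_i for all x ∈ M
    (hexp : ∀ z ∈ M,
      Tendsto (fun n => ∑ i ∈ Finset.range (m n), h n i z • x i) atTop (nhds z)) :
    (∀ z ∈ M, ‖z‖ ≤ A * ‖S z‖) ∧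
    (∀ (f : X →L[ℝ] ℝ) (g : Xd →L[ℝ] ℝ), (∀ n, g (e n) = f (x n)) →
      (1 / B) * ‖f.comp M.subtypeL‖ ≤ ‖g‖) :=
  stmt10_general e x M A hA hBessel m h S hS B hB hSB hexp
end

section
/- Let {x_n} be an approximative atomic system for K ∈ L(X) in a Banach space X, and suppose K has a pseudo-inverse K†. Then {x_n} is an approximative family of local atoms for the subspace K(X): setting f_{n,i} = (K†|_{K(X)})*(h_{n,i}), the sequence {f_{n,i}} is an approximative X_d-Bessel sequence for K(X) and x = lim_{n→∞} Σ_{i=1}^{m_n} f_{n,i}(x) x_i for all x ∈ K(X). -/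
open Filter Topology

theorem ContinuousLinearMap.apply_apply_of_comp_comp_eq_self {R E F : Type*} [Semiring R]
    [TopologicalSpace E] [AddCommMonoid E] [Module R E]
    [TopologicalSpace F] [AddCommMonoid F] [Module R F]
    {K : E →L[R] F} {Kd : F →L[R] E} (hKd : K.comp (Kd.comp K) = K)
    {y : F} (hy : y ∈ LinearMap.range (K : E →ₗ[R] F)) : K (Kd y) = y := by
  obtain ⟨z, rfl⟩ := hy
  exact DFunLike.congr_fun hKd z

theorem norm_apply_clm_apply_le {E F G : Type*} [SeminormedAddCommGroup E]
    [SeminormedAddCommGroup F] [NormedSpace ℝ E] [NormedSpace ℝ F] [SeminormedAddCommGroup G]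
    {S : E → G} {C : ℝ} (hC : 0 ≤ C) (hSC : ∀ z, ‖S z‖ ≤ C * ‖z‖) (T : F →L[ℝ] E) (y : F) :
    ‖S (T y)‖ ≤ C * ‖T‖ * ‖y‖ :=
  calc ‖S (T y)‖ ≤ C * ‖T y‖ := hSC (T y)
    _ ≤ C * (‖T‖ * ‖y‖) := mul_le_mul_of_nonneg_left (T.le_opNorm y) hC
    _ = C * ‖T‖ * ‖y‖ := (mul_assoc _ _ _).symm

theorem stmt11_general {X Xd : Type*}
    [NormedAddCommGroup X] [NormedSpace ℝ X]
    [NormedAddCommGroup Xd] [NormedSpace ℝ Xd]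
    (e : ℕ → Xd)
    (x : ℕ → X) (K Kd : X →L[ℝ] X)
    -- K† is a pseudo-inverse of K
    (hKd : K.comp (Kd.comp K) = K)
    -- associated approximative Xd-Bessel sequence {h_{n,i}} with bound C and
    -- analysis operator S
    (m : ℕ → ℕ)
    (h : ℕ → ℕ → (X →L[ℝ] ℝ)) (S : X →L[ℝ] Xd)
    (hS : ∀ z : X,
      Tendsto (fun n => ∑ i ∈ Finset.range (m n), h n i z • e i) atTop (nhds (S z)))
    (C : ℝ) (hC : 0 < C) (hSC : ∀ z : X, ‖S z‖ ≤ C * ‖z‖)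
    -- K(x) = lim_n Σ_{i=1}^{m_n} h_{n,i}(x) x_i
    (hKexp : ∀ z : X,
      Tendsto (fun n => ∑ i ∈ Finset.range (m n), h n i z • x i) atTop (nhds (K z))) :
    ∀ y ∈ LinearMap.range (K : X →ₗ[ℝ] X),
      -- reconstruction on K(X) with the functionals f_{n,i} = h_{n,i} ∘ K†
      Tendsto (fun n => ∑ i ∈ Finset.range (m n), h n i (Kd y) • x i) atTop (nhds y) ∧
      -- {f_{n,i}} is an approximative Xd-Bessel sequence for K(X), with analysis
      -- operator S ∘ K† and bound C‖K†‖
      Tendsto (fun n => ∑ i ∈ Finset.range (m n), h n i (Kd y) • e i) atTop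
        (nhds (S (Kd y))) ∧
      ‖S (Kd y)‖ ≤ C * ‖Kd‖ * ‖y‖ := by
  intro y hy
  have hKKd : K (Kd y) = y := K.apply_apply_of_comp_comp_eq_self hKd hy
  refine ⟨?_, hS (Kd y), norm_apply_clm_apply_le hC.le hSC Kd y⟩
  simpa only [hKKd] using hKexp (Kd y)

theorem stmt11 {X Xd : Type*}
    [NormedAddCommGroup X] [NormedSpace ℝ X] [CompleteSpace X]
    [NormedAddCommGroup Xd] [NormedSpace ℝ Xd] [CompleteSpace Xd]
    (coord : ℕ → (Xd →L[ℝ] ℝ)) (e : ℕ → Xd)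
    (hcoord_e : ∀ k n, coord k (e n) = if k = n then (1 : ℝ) else 0)
    (hbasis : ∀ c : Xd,
      Tendsto (fun N => ∑ k ∈ Finset.range N, coord k c • e k) atTop (nhds c))
    (x : ℕ → X) (K Kd : X →L[ℝ] X)
    -- K† is a pseudo-inverse of K
    (hKd : K.comp (Kd.comp K) = K)
    -- {x_n} is a Bessel sequence
    (A : ℝ) (hBessel : ∀ f : X →L[ℝ] ℝ, ∃ g : Xd →L[ℝ] ℝ,
        (∀ n, g (e n) = f (x n)) ∧ ‖g‖ ≤ A * ‖f‖)
    -- associated approximative Xd-Bessel sequence {h_{n,i}} with bound C and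
    -- analysis operator S
    (m : ℕ → ℕ) (hm : StrictMono m) (hm0 : 0 < m 0)
    (h : ℕ → ℕ → (X →L[ℝ] ℝ)) (S : X →L[ℝ] Xd)
    (hS : ∀ z : X,
      Tendsto (fun n => ∑ i ∈ Finset.range (m n), h n i z • e i) atTop (nhds (S z)))
    (C : ℝ) (hC : 0 < C) (hSC : ∀ z : X, ‖S z‖ ≤ C * ‖z‖)
    -- K(x) = lim_n Σ_{i=1}^{m_n} h_{n,i}(x) x_i
    (hKexp : ∀ z : X,
      Tendsto (fun n => ∑ i ∈ Finset.range (m n), h n i z • x i) atTop (nhds (K z))) :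
    ∀ y ∈ LinearMap.range (K : X →ₗ[ℝ] X),
      -- reconstruction on K(X) with the functionals f_{n,i} = h_{n,i} ∘ K†
      Tendsto (fun n => ∑ i ∈ Finset.range (m n), h n i (Kd y) • x i) atTop (nhds y) ∧
      -- {f_{n,i}} is an approximative Xd-Bessel sequence for K(X), with analysis
      -- operator S ∘ K† and bound C‖K†‖
      Tendsto (fun n => ∑ i ∈ Finset.range (m n), h n i (Kd y) • e i) atTop
        (nhds (S (Kd y))) ∧
      ‖S (Kd y)‖ ≤ C * ‖Kd‖ * ‖y‖ :=
  stmt11_general e x K Kd hKd m h S hS C hC hSC hKexp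
end

section
/- Let X_d be a reflexive BK-space whose dual has the canonical unit vectors as basis, {x_n} ⊆ X, K ∈ L(X), and T : X_d → X a bounded linear operator with T(e_n) = x_n for all n. If range(K**) ⊆ range(T**) and the closure of T*(X*) is a complemented subspace of X_d*, then {x_n} is an approximative atomic system for K: there exists an approximative X_d-Bessel sequence {h_{n,i}} ⊆ X* such that K(x) = lim_{n→∞} Σ_{i=1}^{m_n} h_{n,i}(x) x_i for all x ∈ X. -/
open Filter Topology

/-!
Reflexivity of `Xd` lets one pull the projection `Q` of `Xd*` back to an operator `P` on `Xd`
with `P* = Q`. Since `Q` fixes `T*(X*)`, `T ∘ P = T`, and since `Q` takes values in the closure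
of `T*(X*)`, `ker T ⊆ ker P`; so `P` projects onto a closed complement of `ker T`, on which `T`
is injective. Reflexivity also turns `range K** ⊆ range T**` into `range K ⊆ range T`, so
sending `z` to the unique preimage of `K z` in `range P` is a linear map `S` with closed graph,
hence bounded, and `T ∘ S = K`. Expanding `S z` in the basis `{e_n}` and applying `T` gives the
reconstruction `K z = lim ∑_{i < n} e_i*(S z) x_i`.
-/

namespace adjB

variable {X Y Z : Type*} [NormedAddCommGroup X] [NormedSpace ℝ X]
  [NormedAddCommGroup Y] [NormedSpace ℝ Y] [NormedAddCommGroup Z] [NormedSpace ℝ Z]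

@[simp]
theorem apply (T : X →L[ℝ] Y) (f : Y →L[ℝ] ℝ) : adjB T f = f.comp T := rfl

theorem comp (T : Y →L[ℝ] Z) (P : X →L[ℝ] Y) : adjB (T.comp P) = (adjB P).comp (adjB T) := rfl

theorem injective : Function.Injective (adjB : (X →L[ℝ] Y) → _) := by
  intro T T' h
  ext c
  exact (SeparatingDual.eq_iff_forall_dual_eq (R := ℝ)).2 fun f => congr($h f c)

theorem exists_eq_of_surjective_inclusionInDoubleDual
    (hY : Function.Surjective (NormedSpace.inclusionInDoubleDual ℝ Y))
    (Q : (Y →L[ℝ] ℝ) →L[ℝ] (X →L[ℝ] ℝ)) : ∃ P : X →L[ℝ] Y, adjB P = Q := by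
  let J := LinearIsometryEquiv.ofSurjective (NormedSpace.inclusionInDoubleDualLi ℝ) hY
  refine ⟨(J.symm : _ →L[ℝ] Y).comp ((adjB Q).comp (NormedSpace.inclusionInDoubleDual ℝ X)), ?_⟩
  ext g c
  exact DFunLike.congr_fun (J.apply_symm_apply _) g

theorem range_subset_of_range_adjB_subset
    (hY : Function.Surjective (NormedSpace.inclusionInDoubleDual ℝ Y))
    (T : Y →L[ℝ] X) (K : Z →L[ℝ] X)
    (h : Set.range (adjB (adjB K)) ⊆ Set.range (adjB (adjB T))) :
    Set.range K ⊆ Set.range T := by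
  rintro _ ⟨z, rfl⟩
  obtain ⟨Φ, hΦ⟩ := h ⟨NormedSpace.inclusionInDoubleDual ℝ Z z, rfl⟩
  obtain ⟨c, rfl⟩ := hY Φ
  -- `T** ∘ ι = ι ∘ T` holds by definition, so `hΦ` reads `ι (T c) = ι (K z)`.
  exact ⟨c, (NormedSpace.inclusionInDoubleDualLi (E := X) ℝ).injective hΦ⟩

theorem ker_le_ker_of_range_subset_closure (T : Y →L[ℝ] X) (P : Y →L[ℝ] Z)
    (h : Set.range (adjB P) ⊆ closure (Set.range (adjB T))) :
    T.ker ≤ P.ker := by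
  intro c (hc : T c = 0)
  rw [LinearMap.mem_ker]
  have hclosure : closure (Set.range (adjB T)) ⊆ {u | u c = 0} :=
    closure_minimal (by rintro _ ⟨f, rfl⟩; simp [hc])
      (isClosed_eq (ContinuousLinearMap.apply ℝ ℝ c).continuous continuous_const)
  exact (SeparatingDual.eq_iff_forall_dual_eq (R := ℝ)).2 fun g => by
    simpa using hclosure (h ⟨g, rfl⟩)

end adjB

/-- A Banach-space form of Douglas' factorization lemma: `P` projects onto a closed complement
of `ker T`. -/
theorem ContinuousLinearMap.exists_comp_eq_of_range_subset {𝕜 X Y Z : Type*}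
    [NontriviallyNormedField 𝕜] [NormedAddCommGroup X] [NormedSpace 𝕜 X]
    [NormedAddCommGroup Y] [NormedSpace 𝕜 Y] [CompleteSpace Y]
    [NormedAddCommGroup Z] [NormedSpace 𝕜 Z] [CompleteSpace Z]
    (T : Y →L[𝕜] X) (K : Z →L[𝕜] X) (P : Y →L[𝕜] Y) (hTP : T.comp P = T)
    (hker : T.ker ≤ P.ker) (hKT : Set.range K ⊆ Set.range T) :
    ∃ S : Z →L[𝕜] Y, T.comp S = K := by
  have hTP' (y : Y) : T (P y) = T y := congr($hTP y)
  have hPP (y : Y) : P (P y) = P y := by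
    have : P y - y ∈ P.ker := hker (by simp [hTP'])
    simpa [sub_eq_zero] using this
  have hinj {y y' : Y} (hT : T y = T y') (hy : P y = y) (hy' : P y' = y') : y = y' := by
    have : y - y' ∈ P.ker := hker (by simp [hT])
    simpa [hy, hy', sub_eq_zero] using this
  choose c hc using fun z => hKT ⟨z, rfl⟩
  set S₀ : Z → Y := fun z => P (c z)
  have hS₀ (z : Z) : T (S₀ z) = K z ∧ P (S₀ z) = S₀ z := ⟨(hTP' _).trans (hc z), hPP _⟩
  have hchar (z : Z) (y : Y) : T y = K z ∧ P y = y ↔ y = S₀ z :=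
    ⟨fun ⟨hT, hP⟩ => hinj (hT.trans (hS₀ z).1.symm) hP (hS₀ z).2, by rintro rfl; exact hS₀ z⟩
  let S : Z →ₗ[𝕜] Y :=
    { toFun := S₀
      map_add' := fun a b => ((hchar _ _).1
        ⟨by simp [(hS₀ a).1, (hS₀ b).1], by simp [(hS₀ a).2, (hS₀ b).2]⟩).symm
      map_smul' := fun r a => ((hchar _ _).1
        ⟨by simp [(hS₀ a).1], by simp [(hS₀ a).2]⟩).symm }
  have hgraph : (S.graph : Set (Z × Y)) = {p | T p.2 = K p.1} ∩ {p | P p.2 = p.2} := by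
    ext p
    exact (LinearMap.mem_graph_iff S p).trans (hchar p.1 p.2).symm
  have hS : Continuous S := S.continuous_of_isClosed_graph <| hgraph ▸
    (isClosed_eq (T.continuous.comp continuous_snd) (K.continuous.comp continuous_fst)).inter
      (isClosed_eq (P.continuous.comp continuous_snd) continuous_snd)
  exact ⟨⟨S, hS⟩, ContinuousLinearMap.ext fun z => (hS₀ z).1⟩

theorem stmt14_general {X Xd : Type*}
    [NormedAddCommGroup X] [NormedSpace ℝ X] [CompleteSpace X]
    [NormedAddCommGroup Xd] [NormedSpace ℝ Xd] [CompleteSpace Xd]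
    (coord : ℕ → (Xd →L[ℝ] ℝ)) (e : ℕ → Xd)
    (hbasis : ∀ c : Xd,
      Tendsto (fun N => ∑ k ∈ Finset.range N, coord k c • e k) atTop (nhds c))
    -- Xd is reflexive
    (hrefl : ∀ Ψ : (Xd →L[ℝ] ℝ) →L[ℝ] ℝ, ∃ c : Xd, ∀ g : Xd →L[ℝ] ℝ, Ψ g = g c)
    (x : ℕ → X) (K : X →L[ℝ] X) (T : Xd →L[ℝ] X)
    (hTe : ∀ n, T (e n) = x n)
    (hrange : Set.range (adjB (adjB K)) ⊆ Set.range (adjB (adjB T)))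
    -- the closure of T*(X*) is complemented in Xd*
    (hcompl : ∃ Q : (Xd →L[ℝ] ℝ) →L[ℝ] (Xd →L[ℝ] ℝ),
        Q.comp Q = Q ∧ Set.range Q = closure (Set.range (adjB T))) :
    -- {x_n} is a Bessel sequence for X with respect to Xd
    (∃ A : ℝ, 0 < A ∧ ∀ f : X →L[ℝ] ℝ, ∃ g : Xd →L[ℝ] ℝ,
        (∀ n, g (e n) = f (x n)) ∧ ‖g‖ ≤ A * ‖f‖) ∧
    -- and there is an approximative Xd-Bessel sequence {h_{n,i}} reconstructing K
    (∃ (m : ℕ → ℕ) (h : ℕ → ℕ → (X →L[ℝ] ℝ)) (S : X →L[ℝ] Xd) (B : ℝ),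
      StrictMono m ∧ 0 < m 0 ∧ 0 < B ∧
      (∀ z : X,
        Tendsto (fun n => ∑ i ∈ Finset.range (m n), h n i z • e i) atTop (nhds (S z))) ∧
      (∀ z : X, ‖S z‖ ≤ B * ‖z‖) ∧
      (∀ z : X,
        Tendsto (fun n => ∑ i ∈ Finset.range (m n), h n i z • x i) atTop (nhds (K z)))) := by
  obtain ⟨Q, hQQ, hQrange⟩ := hcompl
  have hXd : Function.Surjective (NormedSpace.inclusionInDoubleDual ℝ Xd) := fun Ψ =>
    (hrefl Ψ).imp fun _ hc => (ContinuousLinearMap.ext hc).symm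
  obtain ⟨P, rfl⟩ := adjB.exists_eq_of_surjective_inclusionInDoubleDual hXd Q
  have hTP : T.comp P = T := adjB.injective <| by
    ext1 f
    obtain ⟨g, hg⟩ : adjB T f ∈ Set.range (adjB P) := hQrange ▸ subset_closure ⟨f, rfl⟩
    rw [adjB.comp, ContinuousLinearMap.comp_apply, ← hg, ← ContinuousLinearMap.comp_apply, hQQ]
  obtain ⟨S, hTS⟩ := T.exists_comp_eq_of_range_subset K P hTP
    (adjB.ker_le_ker_of_range_subset_closure T P hQrange.le)
    (adjB.range_subset_of_range_adjB_subset hXd T K hrange)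
  have hS (z : X) := (hbasis (S z)).comp (tendsto_add_atTop_nat 1)
  refine ⟨⟨‖T‖ + 1, by positivity, fun f => ⟨f.comp T, fun n => by simp [hTe], ?_⟩⟩,
    ⟨(· + 1), fun n i => (coord i).comp S, S, ‖S‖ + 1, strictMono_id.add_const 1, Nat.one_pos,
      by positivity, hS, fun z => ?_, fun z => ?_⟩⟩
  · calc ‖f.comp T‖ ≤ ‖f‖ * ‖T‖ := f.opNorm_comp_le T
      _ ≤ (‖T‖ + 1) * ‖f‖ := by nlinarith [norm_nonneg f, norm_nonneg T]
  · calc ‖S z‖ ≤ ‖S‖ * ‖z‖ := S.le_opNorm z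
      _ ≤ (‖S‖ + 1) * ‖z‖ := by nlinarith [norm_nonneg z]
  · have := (T.continuous.tendsto (S z)).comp (hS z)
    simpa [Function.comp_def, map_sum, hTe, ← ContinuousLinearMap.comp_apply T S, hTS] using this

theorem stmt14 {X Xd : Type*}
    [NormedAddCommGroup X] [NormedSpace ℝ X] [CompleteSpace X]
    [NormedAddCommGroup Xd] [NormedSpace ℝ Xd] [CompleteSpace Xd]
    (coord : ℕ → (Xd →L[ℝ] ℝ)) (e : ℕ → Xd)
    (hcoord_e : ∀ k n, coord k (e n) = if k = n then (1 : ℝ) else 0)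
    (hbasis : ∀ c : Xd,
      Tendsto (fun N => ∑ k ∈ Finset.range N, coord k c • e k) atTop (nhds c))
    -- {e_n*} is a basis of Xd*
    (hdualbasis : ∀ g : Xd →L[ℝ] ℝ,
      Tendsto (fun N => ∑ k ∈ Finset.range N, g (e k) • coord k) atTop (nhds g))
    -- Xd is reflexive
    (hrefl : ∀ Ψ : (Xd →L[ℝ] ℝ) →L[ℝ] ℝ, ∃ c : Xd, ∀ g : Xd →L[ℝ] ℝ, Ψ g = g c)
    (x : ℕ → X) (K : X →L[ℝ] X) (T : Xd →L[ℝ] X)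
    (hTe : ∀ n, T (e n) = x n)
    (hrange : Set.range (adjB (adjB K)) ⊆ Set.range (adjB (adjB T)))
    -- the closure of T*(X*) is complemented in Xd*
    (hcompl : ∃ Q : (Xd →L[ℝ] ℝ) →L[ℝ] (Xd →L[ℝ] ℝ),
        Q.comp Q = Q ∧ Set.range Q = closure (Set.range (adjB T))) :
    -- {x_n} is a Bessel sequence for X with respect to Xd
    (∃ A : ℝ, 0 < A ∧ ∀ f : X →L[ℝ] ℝ, ∃ g : Xd →L[ℝ] ℝ,
        (∀ n, g (e n) = f (x n)) ∧ ‖g‖ ≤ A * ‖f‖) ∧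
    -- and there is an approximative Xd-Bessel sequence {h_{n,i}} reconstructing K
    (∃ (m : ℕ → ℕ) (h : ℕ → ℕ → (X →L[ℝ] ℝ)) (S : X →L[ℝ] Xd) (B : ℝ),
      StrictMono m ∧ 0 < m 0 ∧ 0 < B ∧
      (∀ z : X,
        Tendsto (fun n => ∑ i ∈ Finset.range (m n), h n i z • e i) atTop (nhds (S z))) ∧
      (∀ z : X, ‖S z‖ ≤ B * ‖z‖) ∧
      (∀ z : X,
        Tendsto (fun n => ∑ i ∈ Finset.range (m n), h n i z • x i) atTop (nhds (K z)))) :=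
  stmt14_general coord e hbasis hrefl x K T hTe hrange hcompl
end

section
/- Let {x_n} be a Bessel sequence for X with respect to X_d with synthesis operator T, let M be a closed subspace of X, and let P : X → X be a continuous projection onto M. Then the following are equivalent: (a) {x_n} is an approximative family of local atoms for M; (b) {x_n} is an approximative atomic system for P; (c) there exists a bounded linear operator U : M → X_d such that T∘U∘P = P. -/
open Filter Topology Finset

/-! Since the synthesis operator maps `e i` to `x i`, whenever `∑ c_{n,i} e_i → s` and
`∑ c_{n,i} x_i → y` we get `T s = y`: an approximative atomic system for `f` yields `S` with
`T ∘ S = f`. Conversely, given such `S`, expanding `S z` in the basis `{e_i}` and applying `T`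
gives one, with `m n = n + 1` and `h_{n,i} = e_i^* ∘ S`. For a projection `P` onto `M`, such
`S` correspond to `U` with `T ∘ U ∘ P = P` via `S = U ∘ P` and `U = S|_M`, and representing
`P` on `X` is the same as representing the identity on `M`, by precomposing with `P`. -/

section ApproxAtomicSystem

variable (𝕜 : Type*) {X Xd : Type*} [NormedField 𝕜]
  [NormedAddCommGroup X] [NormedSpace 𝕜 X] [NormedAddCommGroup Xd] [NormedSpace 𝕜 Xd]

def IsApproxLocalAtoms (e : ℕ → Xd) (x : ℕ → X) (M : Submodule 𝕜 X) : Prop :=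
  ∃ (m : ℕ → ℕ) (h : ℕ → ℕ → (X →L[𝕜] 𝕜)) (S : X →L[𝕜] Xd),
    StrictMono m ∧ 0 < m 0 ∧
    (∀ z ∈ M, Tendsto (fun n => ∑ i ∈ range (m n), h n i z • e i) atTop (𝓝 (S z))) ∧
    (∀ z ∈ M, Tendsto (fun n => ∑ i ∈ range (m n), h n i z • x i) atTop (𝓝 z))

def IsApproxAtomicSystem (e : ℕ → Xd) (x : ℕ → X) (f : X → X) : Prop :=
  ∃ (m : ℕ → ℕ) (h : ℕ → ℕ → (X →L[𝕜] 𝕜)) (S : X →L[𝕜] Xd),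
    StrictMono m ∧ 0 < m 0 ∧
    (∀ z, Tendsto (fun n => ∑ i ∈ range (m n), h n i z • e i) atTop (𝓝 (S z))) ∧
    (∀ z, Tendsto (fun n => ∑ i ∈ range (m n), h n i z • x i) atTop (𝓝 (f z)))

variable {𝕜} {e : ℕ → Xd} {x : ℕ → X}

theorem isApproxLocalAtoms_iff_isApproxAtomicSystem {M : Submodule 𝕜 X} {P : X →L[𝕜] X}
    (hPmem : ∀ z, P z ∈ M) (hPid : ∀ z ∈ M, P z = z) :
    IsApproxLocalAtoms 𝕜 e x M ↔ IsApproxAtomicSystem 𝕜 e x P := by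
  constructor
  · rintro ⟨m, h, S, hm, hm0, he, hx⟩
    exact ⟨m, fun n i => (h n i).comp P, S.comp P, hm, hm0,
      fun z => he (P z) (hPmem z), fun z => hx (P z) (hPmem z)⟩
  · rintro ⟨m, h, S, hm, hm0, he, hx⟩
    exact ⟨m, h, S, hm, hm0, fun z _ => he z, fun z hz => by simpa [hPid z hz] using hx z⟩

variable {coord : ℕ → Xd →L[𝕜] 𝕜} {T : Xd →L[𝕜] X}

theorem synthesis_apply_basis (hcoord_e : ∀ k n, coord k (e n) = if k = n then 1 else 0)
    (hT : ∀ c, Tendsto (fun N => ∑ n ∈ range N, coord n c • x n) atTop (𝓝 (T c))) (i : ℕ) :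
    T (e i) = x i := by
  refine tendsto_nhds_unique (hT (e i)) (tendsto_const_nhds.congr' ?_)
  filter_upwards [eventually_gt_atTop i] with N hN
  simp [hcoord_e, ite_smul, hN]

theorem synthesis_eq_of_tendsto (hTe : ∀ i, T (e i) = x i) {N : ℕ → ℕ} {c : ℕ → ℕ → 𝕜}
    {s : Xd} {y : X} (hs : Tendsto (fun n => ∑ i ∈ range (N n), c n i • e i) atTop (𝓝 s))
    (hy : Tendsto (fun n => ∑ i ∈ range (N n), c n i • x i) atTop (𝓝 y)) : T s = y :=
  tendsto_nhds_unique (by simpa [Function.comp_def, hTe] using (T.continuous.tendsto s).comp hs) hy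

theorem IsApproxAtomicSystem.exists_synthesis_comp_eq (hTe : ∀ i, T (e i) = x i) {f : X → X}
    (hf : IsApproxAtomicSystem 𝕜 e x f) : ∃ S : X →L[𝕜] Xd, ∀ z, T (S z) = f z := by
  obtain ⟨m, h, S, -, -, he, hx⟩ := hf
  exact ⟨S, fun z => synthesis_eq_of_tendsto hTe (he z) (hx z)⟩

theorem isApproxAtomicSystem_of_synthesis_comp_eq
    (hbasis : ∀ c, Tendsto (fun N => ∑ k ∈ range N, coord k c • e k) atTop (𝓝 c))
    (hT : ∀ c, Tendsto (fun N => ∑ n ∈ range N, coord n c • x n) atTop (𝓝 (T c)))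
    {f : X → X} (S : X →L[𝕜] Xd) (hS : ∀ z, T (S z) = f z) :
    IsApproxAtomicSystem 𝕜 e x f := by
  refine ⟨fun n => n + 1, fun _ i => (coord i).comp S, S, strictMono_id.add_const 1,
    Nat.one_pos, fun z => ?_, fun z => ?_⟩
  · exact (tendsto_add_atTop_iff_nat 1).mpr (hbasis (S z))
  · exact hS z ▸ (tendsto_add_atTop_iff_nat 1).mpr (hT (S z))

theorem isApproxAtomicSystem_iff_exists_synthesis_comp_eq
    (hcoord_e : ∀ k n, coord k (e n) = if k = n then 1 else 0)
    (hbasis : ∀ c, Tendsto (fun N => ∑ k ∈ range N, coord k c • e k) atTop (𝓝 c))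
    (hT : ∀ c, Tendsto (fun N => ∑ n ∈ range N, coord n c • x n) atTop (𝓝 (T c)))
    {f : X → X} : IsApproxAtomicSystem 𝕜 e x f ↔ ∃ S : X →L[𝕜] Xd, ∀ z, T (S z) = f z :=
  ⟨fun hf => hf.exists_synthesis_comp_eq (synthesis_apply_basis hcoord_e hT),
    fun ⟨S, hS⟩ => isApproxAtomicSystem_of_synthesis_comp_eq hbasis hT S hS⟩

end ApproxAtomicSystem

theorem exists_synthesis_comp_eq_iff_exists_comp_codRestrict {𝕜 X Xd : Type*} [NormedField 𝕜]
    [NormedAddCommGroup X] [NormedSpace 𝕜 X] [NormedAddCommGroup Xd] [NormedSpace 𝕜 Xd]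
    (T : Xd →L[𝕜] X) {M : Submodule 𝕜 X} {P : X →L[𝕜] X}
    (hPmem : ∀ z, P z ∈ M) (hPid : ∀ z ∈ M, P z = z) :
    (∃ S : X →L[𝕜] Xd, ∀ z, T (S z) = P z) ↔
      ∃ U : M →L[𝕜] Xd, T.comp (U.comp (P.codRestrict M hPmem)) = P := by
  constructor
  · rintro ⟨S, hS⟩
    refine ⟨S.comp M.subtypeL, ContinuousLinearMap.ext fun z => ?_⟩
    simpa [hPid (P z) (hPmem z)] using hS (P z)
  · rintro ⟨U, hU⟩
    exact ⟨U.comp (P.codRestrict M hPmem), fun z => congrArg (· z) hU⟩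

theorem stmt15_general {X Xd : Type*}
    [NormedAddCommGroup X] [NormedSpace ℝ X]
    [NormedAddCommGroup Xd] [NormedSpace ℝ Xd]
    (coord : ℕ → (Xd →L[ℝ] ℝ)) (e : ℕ → Xd)
    (hcoord_e : ∀ k n, coord k (e n) = if k = n then (1 : ℝ) else 0)
    (hbasis : ∀ c : Xd,
      Tendsto (fun N => ∑ k ∈ Finset.range N, coord k c • e k) atTop (nhds c))
    (x : ℕ → X)
    -- T is the synthesis operator of the Bessel sequence {x_n}
    (T : Xd →L[ℝ] X)
    (hT : ∀ c : Xd,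
      Tendsto (fun N => ∑ n ∈ Finset.range N, coord n c • x n) atTop (nhds (T c)))
    -- M a closed subspace, P a continuous projection of X onto M
    (M : Submodule ℝ X)
    (P : X →L[ℝ] X) (hPmem : ∀ z : X, P z ∈ M) (hPid : ∀ z ∈ M, P z = z) :
    -- (a) ↔ (b)
    ((∃ (m : ℕ → ℕ) (h : ℕ → ℕ → (X →L[ℝ] ℝ)) (S : X →L[ℝ] Xd),
        StrictMono m ∧ 0 < m 0 ∧
        (∀ z ∈ M, Tendsto (fun n => ∑ i ∈ Finset.range (m n), h n i z • e i)
          atTop (nhds (S z))) ∧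
        (∀ z ∈ M, Tendsto (fun n => ∑ i ∈ Finset.range (m n), h n i z • x i)
          atTop (nhds z))) ↔
      (∃ (m : ℕ → ℕ) (h : ℕ → ℕ → (X →L[ℝ] ℝ)) (S : X →L[ℝ] Xd),
        StrictMono m ∧ 0 < m 0 ∧
        (∀ z : X, Tendsto (fun n => ∑ i ∈ Finset.range (m n), h n i z • e i)
          atTop (nhds (S z))) ∧
        (∀ z : X, Tendsto (fun n => ∑ i ∈ Finset.range (m n), h n i z • x i)
          atTop (nhds (P z))))) ∧
    -- (b) ↔ (c)
    ((∃ (m : ℕ → ℕ) (h : ℕ → ℕ → (X →L[ℝ] ℝ)) (S : X →L[ℝ] Xd),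
        StrictMono m ∧ 0 < m 0 ∧
        (∀ z : X, Tendsto (fun n => ∑ i ∈ Finset.range (m n), h n i z • e i)
          atTop (nhds (S z))) ∧
        (∀ z : X, Tendsto (fun n => ∑ i ∈ Finset.range (m n), h n i z • x i)
          atTop (nhds (P z)))) ↔
      (∃ U : M →L[ℝ] Xd, T.comp (U.comp (P.codRestrict M hPmem)) = P)) :=
  ⟨isApproxLocalAtoms_iff_isApproxAtomicSystem hPmem hPid,
    (isApproxAtomicSystem_iff_exists_synthesis_comp_eq hcoord_e hbasis hT).trans
      (exists_synthesis_comp_eq_iff_exists_comp_codRestrict T hPmem hPid)⟩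

theorem stmt15 {X Xd : Type*}
    [NormedAddCommGroup X] [NormedSpace ℝ X] [CompleteSpace X]
    [NormedAddCommGroup Xd] [NormedSpace ℝ Xd] [CompleteSpace Xd]
    (coord : ℕ → (Xd →L[ℝ] ℝ)) (e : ℕ → Xd)
    (hcoord_e : ∀ k n, coord k (e n) = if k = n then (1 : ℝ) else 0)
    (hbasis : ∀ c : Xd,
      Tendsto (fun N => ∑ k ∈ Finset.range N, coord k c • e k) atTop (nhds c))
    -- {e_n*} is a basis of Xd*
    (hdualbasis : ∀ g : Xd →L[ℝ] ℝ,
      Tendsto (fun N => ∑ k ∈ Finset.range N, g (e k) • coord k) atTop (nhds g))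
    (x : ℕ → X)
    -- T is the synthesis operator of the Bessel sequence {x_n}
    (T : Xd →L[ℝ] X)
    (hT : ∀ c : Xd,
      Tendsto (fun N => ∑ n ∈ Finset.range N, coord n c • x n) atTop (nhds (T c)))
    -- M a closed subspace, P a continuous projection of X onto M
    (M : Submodule ℝ X) (hM : IsClosed (M : Set X))
    (P : X →L[ℝ] X) (hPmem : ∀ z : X, P z ∈ M) (hPid : ∀ z ∈ M, P z = z) :
    -- (a) ↔ (b)
    ((∃ (m : ℕ → ℕ) (h : ℕ → ℕ → (X →L[ℝ] ℝ)) (S : X →L[ℝ] Xd),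
        StrictMono m ∧ 0 < m 0 ∧
        (∀ z ∈ M, Tendsto (fun n => ∑ i ∈ Finset.range (m n), h n i z • e i)
          atTop (nhds (S z))) ∧
        (∀ z ∈ M, Tendsto (fun n => ∑ i ∈ Finset.range (m n), h n i z • x i)
          atTop (nhds z))) ↔
      (∃ (m : ℕ → ℕ) (h : ℕ → ℕ → (X →L[ℝ] ℝ)) (S : X →L[ℝ] Xd),
        StrictMono m ∧ 0 < m 0 ∧
        (∀ z : X, Tendsto (fun n => ∑ i ∈ Finset.range (m n), h n i z • e i)
          atTop (nhds (S z))) ∧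
        (∀ z : X, Tendsto (fun n => ∑ i ∈ Finset.range (m n), h n i z • x i)
          atTop (nhds (P z))))) ∧
    -- (b) ↔ (c)
    ((∃ (m : ℕ → ℕ) (h : ℕ → ℕ → (X →L[ℝ] ℝ)) (S : X →L[ℝ] Xd),
        StrictMono m ∧ 0 < m 0 ∧
        (∀ z : X, Tendsto (fun n => ∑ i ∈ Finset.range (m n), h n i z • e i)
          atTop (nhds (S z))) ∧
        (∀ z : X, Tendsto (fun n => ∑ i ∈ Finset.range (m n), h n i z • x i)
          atTop (nhds (P z)))) ↔
      (∃ U : M →L[ℝ] Xd, T.comp (U.comp (P.codRestrict M hPmem)) = P)) :=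
  stmt15_general coord e hcoord_e hbasis x T hT M P hPmem hPid
end
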